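/- arXiv:2208.06948 — 2 statements merged into one kernel-verified Lean document; each statement's English description precedes it below -/
import Mathlib

section
/- For jointly distributed random variables X, Y, Z on finite sets, H_L(Y|X) − H_L(Y|Z) = I_L(Y;Z|X) − I_L(Y;X|Z); in particular, since I_L(Y;X|Z) ≥ 0, it holds that H_L(Y|X) ≤ H_L(Y|Z) + I_L(Y;Z|X). -/
open Finset

open Classical in
/-- Probability of an event under a pmf `p` on a finite sample space. -/
noncomputable def pr {Ω : Type*} [Fintype Ω] (p : Ω → ℝ) (E : Ω → Prop) : ℝ :=
  ∑ ω, if E ω then p ω else 0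

/-- Conditional distribution of a random variable `Y` given an event `E`. -/
noncomputable def condDist {Ω 𝒴 : Type*} [Fintype Ω] (p : Ω → ℝ) (Y : Ω → 𝒴)
    (E : Ω → Prop) : 𝒴 → ℝ :=
  fun y => pr p (fun ω => Y ω = y ∧ E ω) / pr p E

/-- Expected loss `E_{Y∼P}[L(Y,a)]`. -/
noncomputable def expLoss {𝒴 𝒜 : Type*} [Fintype 𝒴] (L : 𝒴 → 𝒜 → ℝ) (P : 𝒴 → ℝ)
    (a : 𝒜) : ℝ :=
  ∑ y, P y * L y a

/-- The `L`-entropy `H_L(P) = min_{a∈𝒜} E_{Y∼P}[L(Y,a)]`. -/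
noncomputable def Lentropy {𝒴 𝒜 : Type*} [Fintype 𝒴] (L : 𝒴 → 𝒜 → ℝ) (P : 𝒴 → ℝ) : ℝ :=
  ⨅ a : 𝒜, expLoss L P a

/-- The `L`-conditional entropy `H_L(Y|X) = Σ_x P_X(x) H_L(P_{Y|X=x})`. -/
noncomputable def LcondEntropy {Ω 𝒳 𝒴 𝒜 : Type*} [Fintype Ω] [Fintype 𝒳] [Fintype 𝒴]
    (L : 𝒴 → 𝒜 → ℝ) (p : Ω → ℝ) (Y : Ω → 𝒴) (X : Ω → 𝒳) : ℝ :=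
  ∑ x, pr p (fun ω => X ω = x) * Lentropy L (condDist p Y (fun ω => X ω = x))

/-- `b` selects, for every probability mass function `P` on `𝒴`, a Bayes action `b P`. -/
def IsBayesSelector {𝒴 𝒜 : Type*} [Fintype 𝒴] (L : 𝒴 → 𝒜 → ℝ) (b : (𝒴 → ℝ) → 𝒜) : Prop :=
  ∀ P : 𝒴 → ℝ, (∀ y, 0 ≤ P y) → (∑ y, P y) = 1 →
    ∀ a : 𝒜, expLoss L P (b P) ≤ expLoss L P a

/-- The `L`-divergence `D_L(P‖Q) = E_{Y∼P}[L(Y,a_Q)] − E_{Y∼P}[L(Y,a_P)]`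
for the choice `a_P = b P`, `a_Q = b Q` of Bayes actions. -/
noncomputable def Ldiv {𝒴 𝒜 : Type*} [Fintype 𝒴] (L : 𝒴 → 𝒜 → ℝ) (b : (𝒴 → ℝ) → 𝒜)
    (P Q : 𝒴 → ℝ) : ℝ :=
  expLoss L P (b Q) - expLoss L P (b P)

/-- The `L`-conditional mutual information
`I_L(Y;Z|X) = Σ_{x,z} P_{X,Z}(x,z) D_L(P_{Y|X=x,Z=z} ‖ P_{Y|X=x})`. -/
noncomputable def LCMI {Ω 𝒳 𝒴 𝒵 𝒜 : Type*} [Fintype Ω] [Fintype 𝒳] [Fintype 𝒴]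
    [Fintype 𝒵] (L : 𝒴 → 𝒜 → ℝ) (b : (𝒴 → ℝ) → 𝒜) (p : Ω → ℝ)
    (Y : Ω → 𝒴) (Z : Ω → 𝒵) (X : Ω → 𝒳) : ℝ :=
  ∑ x, ∑ z, pr p (fun ω => X ω = x ∧ Z ω = z) *
    Ldiv L b (condDist p Y (fun ω => X ω = x ∧ Z ω = z))
      (condDist p Y (fun ω => X ω = x))

section Aux

open Classical

variable {Ω 𝒳 𝒴 𝒵 𝒜 : Type*} [Fintype Ω] [Fintype 𝒳] [Fintype 𝒴] [Fintype 𝒵]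

lemma pr_nonneg (p : Ω → ℝ) (hp : ∀ ω, 0 ≤ p ω) (E : Ω → Prop) : 0 ≤ pr p E := by
  unfold pr
  exact Finset.sum_nonneg fun ω _ => by split <;> simp [hp ω]

lemma pr_congr (p : Ω → ℝ) {E E' : Ω → Prop} (h : ∀ ω, E ω ↔ E' ω) :
    pr p E = pr p E' := by
  unfold pr
  exact Finset.sum_congr rfl fun ω _ => by rw [iff_iff_eq.mp (h ω)]

lemma condDist_congr (p : Ω → ℝ) (Y : Ω → 𝒴) {E E' : Ω → Prop} (h : ∀ ω, E ω ↔ E' ω) :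
    condDist p Y E = condDist p Y E' := by
  funext y
  unfold condDist
  rw [pr_congr p h, pr_congr p (fun ω => and_congr_right fun _ => h ω)]

lemma pr_sum_fiber (p : Ω → ℝ) (Y : Ω → 𝒴) (E : Ω → Prop) :
    ∑ y, pr p (fun ω => Y ω = y ∧ E ω) = pr p E := by
  unfold pr
  rw [Finset.sum_comm]
  refine Finset.sum_congr rfl fun ω _ => ?_
  by_cases hE : E ω <;> simp [hE]

lemma pr_and_le (p : Ω → ℝ) (hp : ∀ ω, 0 ≤ p ω) (A E : Ω → Prop) :
    pr p (fun ω => A ω ∧ E ω) ≤ pr p E := by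
  unfold pr
  refine Finset.sum_le_sum fun ω _ => ?_
  by_cases hE : E ω <;> by_cases hA : A ω <;> simp [hE, hA, hp ω]

lemma pr_and_eq_zero (p : Ω → ℝ) (hp : ∀ ω, 0 ≤ p ω) (A E : Ω → Prop)
    (h : pr p E = 0) : pr p (fun ω => A ω ∧ E ω) = 0 :=
  le_antisymm (h ▸ pr_and_le p hp A E) (pr_nonneg p hp _)

lemma condDist_nonneg (p : Ω → ℝ) (hp : ∀ ω, 0 ≤ p ω) (Y : Ω → 𝒴) (E : Ω → Prop)
    (y : 𝒴) : 0 ≤ condDist p Y E y :=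
  div_nonneg (pr_nonneg p hp _) (pr_nonneg p hp _)

lemma condDist_sum (p : Ω → ℝ) (Y : Ω → 𝒴) (E : Ω → Prop) (h : pr p E ≠ 0) :
    ∑ y, condDist p Y E y = 1 := by
  unfold condDist
  rw [← Finset.sum_div, pr_sum_fiber, div_self h]

lemma mul_expLoss_condDist (L : 𝒴 → 𝒜 → ℝ) (p : Ω → ℝ) (hp : ∀ ω, 0 ≤ p ω)
    (Y : Ω → 𝒴) (E : Ω → Prop) (a : 𝒜) :
    pr p E * expLoss L (condDist p Y E) a
      = ∑ y, pr p (fun ω => Y ω = y ∧ E ω) * L y a := by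
  by_cases h : pr p E = 0
  · rw [h, zero_mul]
    symm
    refine Finset.sum_eq_zero fun y _ => ?_
    rw [pr_and_eq_zero p hp _ _ h, zero_mul]
  · unfold expLoss condDist
    rw [Finset.mul_sum]
    refine Finset.sum_congr rfl fun y _ => ?_
    field_simp

lemma Lentropy_eq_bayes [Fintype 𝒜] [Nonempty 𝒜] (L : 𝒴 → 𝒜 → ℝ)
    (b : (𝒴 → ℝ) → 𝒜) (hb : IsBayesSelector L b) (P : 𝒴 → ℝ)
    (h0 : ∀ y, 0 ≤ P y) (h1 : ∑ y, P y = 1) :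
    Lentropy L P = expLoss L P (b P) := by
  unfold Lentropy
  exact le_antisymm (ciInf_le (Finite.bddBelow_range _) (b P))
    (le_ciInf fun a => hb P h0 h1 a)

lemma tower (L : 𝒴 → 𝒜 → ℝ) (p : Ω → ℝ) (hp : ∀ ω, 0 ≤ p ω)
    (X : Ω → 𝒳) (Y : Ω → 𝒴) (Z : Ω → 𝒵) (x : 𝒳) (a : 𝒜) :
    ∑ z, pr p (fun ω => X ω = x ∧ Z ω = z) *
        expLoss L (condDist p Y (fun ω => X ω = x ∧ Z ω = z)) a
      = pr p (fun ω => X ω = x) * expLoss L (condDist p Y (fun ω => X ω = x)) a := by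
  rw [mul_expLoss_condDist L p hp]
  have h1 : ∀ z, pr p (fun ω => X ω = x ∧ Z ω = z) *
      expLoss L (condDist p Y (fun ω => X ω = x ∧ Z ω = z)) a
      = ∑ y, pr p (fun ω => Y ω = y ∧ (X ω = x ∧ Z ω = z)) * L y a :=
    fun z => mul_expLoss_condDist L p hp Y _ a
  simp_rw [h1]
  rw [Finset.sum_comm]
  refine Finset.sum_congr rfl fun y _ => ?_
  rw [← Finset.sum_mul]
  congr 1
  rw [← pr_sum_fiber p Z (fun ω => Y ω = y ∧ X ω = x)]
  exact Finset.sum_congr rfl fun z _ => pr_congr p (fun ω => by tauto)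

lemma lcmi_eq [Fintype 𝒜] [Nonempty 𝒜] (L : 𝒴 → 𝒜 → ℝ) (b : (𝒴 → ℝ) → 𝒜)
    (hb : IsBayesSelector L b) (p : Ω → ℝ) (hp : ∀ ω, 0 ≤ p ω)
    (X : Ω → 𝒳) (Y : Ω → 𝒴) (Z : Ω → 𝒵) :
    LCMI L b p Y Z X = LcondEntropy L p Y X
      - ∑ x, ∑ z, pr p (fun ω => X ω = x ∧ Z ω = z) *
          expLoss L (condDist p Y (fun ω => X ω = x ∧ Z ω = z))
            (b (condDist p Y (fun ω => X ω = x ∧ Z ω = z))) := by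
  unfold LCMI Ldiv
  simp_rw [mul_sub, Finset.sum_sub_distrib]
  congr 1
  unfold LcondEntropy
  refine Finset.sum_congr rfl fun x _ => ?_
  rw [tower L p hp X Y Z x]
  by_cases h : pr p (fun ω => X ω = x) = 0
  · rw [h, zero_mul, zero_mul]
  · rw [Lentropy_eq_bayes L b hb _ (condDist_nonneg p hp Y _) (condDist_sum p Y _ h)]

lemma lcmi_nonneg [Fintype 𝒜] [Nonempty 𝒜] (L : 𝒴 → 𝒜 → ℝ) (b : (𝒴 → ℝ) → 𝒜)
    (hb : IsBayesSelector L b) (p : Ω → ℝ) (hp : ∀ ω, 0 ≤ p ω)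
    (X : Ω → 𝒳) (Y : Ω → 𝒴) (Z : Ω → 𝒵) :
    0 ≤ LCMI L b p Y Z X := by
  unfold LCMI
  refine Finset.sum_nonneg fun x _ => Finset.sum_nonneg fun z _ => ?_
  by_cases h : pr p (fun ω => X ω = x ∧ Z ω = z) = 0
  · rw [h, zero_mul]
  · refine mul_nonneg (pr_nonneg p hp _) ?_
    unfold Ldiv
    have := hb (condDist p Y (fun ω => X ω = x ∧ Z ω = z))
      (condDist_nonneg p hp Y _) (condDist_sum p Y _ h)
      (b (condDist p Y (fun ω => X ω = x)))
    linarith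

end Aux

/-- `H_L(Y|X) − H_L(Y|Z) = I_L(Y;Z|X) − I_L(Y;X|Z)`; in
particular `H_L(Y|X) ≤ H_L(Y|Z) + I_L(Y;Z|X)`. -/
theorem condEntropy_sub_eq_LCMI_sub {Ω 𝒳 𝒴 𝒵 𝒜 : Type*} [Fintype Ω] [Fintype 𝒳]
    [Fintype 𝒴] [Fintype 𝒵] [Fintype 𝒜] [Nonempty 𝒜]
    (L : 𝒴 → 𝒜 → ℝ) (b : (𝒴 → ℝ) → 𝒜) (hb : IsBayesSelector L b)
    (p : Ω → ℝ) (hp : ∀ ω, 0 ≤ p ω) (hsum : ∑ ω, p ω = 1)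
    (X : Ω → 𝒳) (Y : Ω → 𝒴) (Z : Ω → 𝒵) :
    LcondEntropy L p Y X - LcondEntropy L p Y Z
        = LCMI L b p Y Z X - LCMI L b p Y X Z
      ∧ LcondEntropy L p Y X ≤ LcondEntropy L p Y Z + LCMI L b p Y Z X := by
  classical
  set J : ℝ := ∑ x, ∑ z, pr p (fun ω => X ω = x ∧ Z ω = z) *
      expLoss L (condDist p Y (fun ω => X ω = x ∧ Z ω = z))
        (b (condDist p Y (fun ω => X ω = x ∧ Z ω = z))) with hJ
  have hX : LCMI L b p Y Z X = LcondEntropy L p Y X - J :=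
    lcmi_eq L b hb p hp X Y Z
  have hZ : LCMI L b p Y X Z = LcondEntropy L p Y Z - J := by
    rw [lcmi_eq L b hb p hp Z Y X]
    congr 1
    rw [hJ, Finset.sum_comm]
    refine Finset.sum_congr rfl fun x _ => Finset.sum_congr rfl fun z _ => ?_
    rw [pr_congr p (fun ω => show (Z ω = z ∧ X ω = x) ↔ (X ω = x ∧ Z ω = z) by tauto),
      condDist_congr p Y (fun ω => show (Z ω = z ∧ X ω = x) ↔ (X ω = x ∧ Z ω = z) by tauto)]
  have hnn : 0 ≤ LCMI L b p Y X Z := lcmi_nonneg L b hb p hp Z Y X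
  constructor
  · rw [hX, hZ]; ring
  · rw [hX] at *; linarith
end

section
/- (Quantitative ε-data processing inequality.) Let X, Y, Z be jointly distributed random variables on finite sets 𝒳, 𝒴, 𝒵, and suppose the loss function satisfies |L(y,a)| ≤ M for all y and a. If Y and Z form an ε-Markov chain through X, i.e., I_{χ²}(Y;Z|X) ≤ ε², then H_L(Y|X) ≤ H_L(Y|Z) + 2Mε·√(|𝒳|·|𝒵|). -/
open Finset

/-- Neyman's χ²-divergence `D_{χ²}(P‖Q)`.  (In Lean, `x / 0 = 0`, which realizes
the convention `0²/0 = 0` under absolute continuity.) -/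
noncomputable def chiSqDiv {𝒴 : Type*} [Fintype 𝒴] (P Q : 𝒴 → ℝ) : ℝ :=
  ∑ y, (P y - Q y) ^ 2 / Q y

/-- χ²-conditional mutual information `I_{χ²}(Y;Z|X)`. -/
noncomputable def chiSqCMI {Ω 𝒳 𝒴 𝒵 : Type*} [Fintype Ω] [Fintype 𝒳] [Fintype 𝒴]
    [Fintype 𝒵] (p : Ω → ℝ) (Y : Ω → 𝒴) (Z : Ω → 𝒵) (X : Ω → 𝒳) : ℝ :=
  ∑ x, ∑ z, pr p (fun ω => X ω = x ∧ Z ω = z) *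
    chiSqDiv (condDist p Y (fun ω => X ω = x ∧ Z ω = z))
      (condDist p Y (fun ω => X ω = x))

section MyAux


variable {Ω : Type*} [Fintype Ω] {p : Ω → ℝ}

lemma my_pr_nonneg (hp : ∀ ω, 0 ≤ p ω) (E : Ω → Prop) : 0 ≤ pr p E := by
  unfold pr
  apply Finset.sum_nonneg
  intro ω _
  by_cases h : E ω <;> simp [h, hp ω]

lemma my_pr_mono (hp : ∀ ω, 0 ≤ p ω) {E F : Ω → Prop} (h : ∀ ω, E ω → F ω) :
    pr p E ≤ pr p F := by
  unfold pr
  apply Finset.sum_le_sum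
  intro ω _
  by_cases hE : E ω
  · simp [hE, h ω hE]
  · by_cases hF : F ω <;> simp [hE, hF, hp ω]

lemma my_pr_congr {E F : Ω → Prop} (h : ∀ ω, E ω ↔ F ω) : pr p E = pr p F := by
  unfold pr
  refine Finset.sum_congr rfl fun ω _ => ?_
  by_cases hE : E ω
  · simp [hE, (h ω).1 hE]
  · rw [if_neg hE, if_neg (fun hF => hE ((h ω).2 hF))]

lemma my_pr_zero_of (hp : ∀ ω, 0 ≤ p ω) {E F : Ω → Prop} (h : ∀ ω, E ω → F ω)
    (hF : pr p F = 0) : pr p E = 0 :=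
  le_antisymm (hF ▸ my_pr_mono hp h) (my_pr_nonneg hp E)

lemma my_sum_pr_fiber {β : Type*} [Fintype β] (W : Ω → β) (E : Ω → Prop) :
    ∑ b, pr p (fun ω => W ω = b ∧ E ω) = pr p E := by
  classical
  unfold pr
  rw [Finset.sum_comm]
  refine Finset.sum_congr rfl fun ω _ => ?_
  by_cases hE : E ω <;> simp [hE]

lemma my_sum_pr_univ (W : Ω → β') [Fintype β'] : ∑ b, pr p (fun ω => W ω = b) = ∑ ω, p ω := by
  classical
  have := my_sum_pr_fiber (p := p) W (fun _ => True)
  simpa [pr] using this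

lemma my_condDist_nonneg (hp : ∀ ω, 0 ≤ p ω) {𝒴 : Type*} (Y : Ω → 𝒴) (E : Ω → Prop) (y : 𝒴) :
    0 ≤ condDist p Y E y :=
  div_nonneg (my_pr_nonneg hp _) (my_pr_nonneg hp _)

lemma my_pr_mul_condDist (hp : ∀ ω, 0 ≤ p ω) {𝒴 : Type*} (Y : Ω → 𝒴) (E : Ω → Prop) (y : 𝒴) :
    pr p E * condDist p Y E y = pr p (fun ω => Y ω = y ∧ E ω) := by
  unfold condDist
  rcases eq_or_lt_of_le (my_pr_nonneg hp E) with h | h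
  · rw [← h, zero_mul]
    exact (my_pr_zero_of hp (fun ω hω => hω.2) h.symm).symm
  · rw [mul_comm, div_mul_cancel₀ _ (ne_of_gt h)]

lemma my_sum_condDist_le_one (hp : ∀ ω, 0 ≤ p ω) {𝒴 : Type*} [Fintype 𝒴] (Y : Ω → 𝒴)
    (E : Ω → Prop) : ∑ y, condDist p Y E y ≤ 1 := by
  unfold condDist
  rw [← Finset.sum_div, my_sum_pr_fiber Y E]
  rcases eq_or_lt_of_le (my_pr_nonneg hp E) with h | h
  · rw [← h]; simp
  · rw [div_self (ne_of_gt h)]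

lemma my_Lentropy_le_expLoss {𝒴 𝒜 : Type*} [Fintype 𝒴] [Fintype 𝒜] [Nonempty 𝒜]
    (L : 𝒴 → 𝒜 → ℝ) (P : 𝒴 → ℝ) (a : 𝒜) : Lentropy L P ≤ expLoss L P a :=
  ciInf_le (Set.Finite.bddBelow (Set.finite_range _)) a

lemma my_exists_bayes {𝒴 𝒜 : Type*} [Fintype 𝒴] [Fintype 𝒜] [Nonempty 𝒜]
    (L : 𝒴 → 𝒜 → ℝ) (P : 𝒴 → ℝ) : ∃ a, Lentropy L P = expLoss L P a := by
  obtain ⟨a, ha⟩ := Finite.exists_min (expLoss L P)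
  exact ⟨a, le_antisymm (my_Lentropy_le_expLoss L P a) (le_ciInf ha)⟩

lemma my_chiSqDiv_nonneg {𝒴 : Type*} [Fintype 𝒴] {P Q : 𝒴 → ℝ} (hQ : ∀ y, 0 ≤ Q y) :
    0 ≤ chiSqDiv P Q :=
  Finset.sum_nonneg fun y _ => div_nonneg (sq_nonneg _) (hQ y)

lemma my_l1_le_sqrt_chiSq {𝒴 : Type*} [Fintype 𝒴] (P Q : 𝒴 → ℝ) (hQ : ∀ y, 0 ≤ Q y)
    (hQ1 : ∑ y, Q y ≤ 1) (hac : ∀ y, Q y = 0 → P y = 0) :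
    ∑ y, |P y - Q y| ≤ Real.sqrt (chiSqDiv P Q) := by
  have key : (∑ y, |P y - Q y|) ^ 2 ≤ chiSqDiv P Q * ∑ y, Q y := by
    have cs := Finset.sum_mul_sq_le_sq_mul_sq Finset.univ
      (fun y => |P y - Q y| / Real.sqrt (Q y)) (fun y => Real.sqrt (Q y))
    have e1 : ∀ y : 𝒴, |P y - Q y| / Real.sqrt (Q y) * Real.sqrt (Q y) = |P y - Q y| := by
      intro y
      rcases eq_or_lt_of_le (hQ y) with h | h
      · simp [← h, hac y h.symm]
      · exact div_mul_cancel₀ _ (Real.sqrt_ne_zero'.2 h)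
    have e2 : ∀ y : 𝒴, (|P y - Q y| / Real.sqrt (Q y)) ^ 2 = (P y - Q y) ^ 2 / Q y := by
      intro y
      rw [div_pow, sq_abs, Real.sq_sqrt (hQ y)]
    have e3 : ∀ y : 𝒴, (Real.sqrt (Q y)) ^ 2 = Q y := fun y => Real.sq_sqrt (hQ y)
    calc (∑ y, |P y - Q y|) ^ 2
        = (∑ y, |P y - Q y| / Real.sqrt (Q y) * Real.sqrt (Q y)) ^ 2 := by
          simp_rw [e1]
      _ ≤ (∑ y, (|P y - Q y| / Real.sqrt (Q y)) ^ 2) * ∑ y, (Real.sqrt (Q y)) ^ 2 := cs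
      _ = chiSqDiv P Q * ∑ y, Q y := by simp_rw [e2, e3]; rfl
  have hD : 0 ≤ chiSqDiv P Q := my_chiSqDiv_nonneg hQ
  have h2 : (∑ y, |P y - Q y|) ^ 2 ≤ chiSqDiv P Q := by nlinarith
  have hs : 0 ≤ ∑ y, |P y - Q y| := Finset.sum_nonneg fun y _ => abs_nonneg _
  nlinarith [Real.sq_sqrt hD, Real.sqrt_nonneg (chiSqDiv P Q), sq_nonneg (∑ y, |P y - Q y| - Real.sqrt (chiSqDiv P Q))]

end MyAux

/-- quantitative ε-data processing inequality.  If
`I_{χ²}(Y;Z|X) ≤ ε²` and `|L(y,a)| ≤ M`, then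
`H_L(Y|X) ≤ H_L(Y|Z) + 2Mε √(|𝒳|·|𝒵|)`. -/
theorem eps_data_processing_inequality {Ω 𝒳 𝒴 𝒵 𝒜 : Type*} [Fintype Ω] [Fintype 𝒳]
    [Fintype 𝒴] [Fintype 𝒵] [Fintype 𝒜] [Nonempty 𝒜]
    (L : 𝒴 → 𝒜 → ℝ) (M : ℝ) (hL : ∀ y a, |L y a| ≤ M)
    (p : Ω → ℝ) (hp : ∀ ω, 0 ≤ p ω) (hsum : ∑ ω, p ω = 1)
    (X : Ω → 𝒳) (Y : Ω → 𝒴) (Z : Ω → 𝒵)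
    (ε : ℝ) (hε : 0 ≤ ε) (hchi : chiSqCMI p Y Z X ≤ ε ^ 2) :
    LcondEntropy L p Y X
      ≤ LcondEntropy L p Y Z
        + 2 * M * ε * Real.sqrt ((Fintype.card 𝒳 : ℝ) * (Fintype.card 𝒵 : ℝ)) := by
  classical
  obtain ⟨ω0⟩ : Nonempty Ω := by
    rcases isEmpty_or_nonempty Ω with h | h
    · rw [Finset.univ_eq_empty, Finset.sum_empty] at hsum; norm_num at hsum
    · exact h
  have hM : 0 ≤ M := le_trans (abs_nonneg _) (hL (Y ω0) (Classical.arbitrary 𝒜))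
  choose A hA using fun z : 𝒵 => my_exists_bayes L (condDist p Y (fun ω => Z ω = z))
  have hFnn : ∀ (x : 𝒳) (z : 𝒵), 0 ≤ pr p (fun ω => X ω = x ∧ Z ω = z) :=
    fun x z => my_pr_nonneg hp _
  have hDnn : ∀ (x : 𝒳) (z : 𝒵), 0 ≤ chiSqDiv (condDist p Y (fun ω => X ω = x ∧ Z ω = z))
      (condDist p Y (fun ω => X ω = x)) :=
    fun x z => my_chiSqDiv_nonneg (fun y => my_condDist_nonneg hp _ _ y)
  have hgx : ∀ x : 𝒳, pr p (fun ω => X ω = x)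
      = ∑ z, pr p (fun ω => X ω = x ∧ Z ω = z) := by
    intro x
    rw [← my_sum_pr_fiber (p := p) Z (fun ω => X ω = x)]
    exact Finset.sum_congr rfl fun z _ => my_pr_congr fun ω => and_comm
  have hFsum : ∑ x : 𝒳, ∑ z : 𝒵, pr p (fun ω => X ω = x ∧ Z ω = z) = 1 := by
    calc ∑ x : 𝒳, ∑ z : 𝒵, pr p (fun ω => X ω = x ∧ Z ω = z)
        = ∑ x : 𝒳, pr p (fun ω => X ω = x) :=
          Finset.sum_congr rfl fun x _ => (hgx x).symm
      _ = ∑ ω, p ω := my_sum_pr_univ X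
      _ = 1 := hsum
  have hkey : ∀ (z : 𝒵) (y : 𝒴),
      ∑ x, pr p (fun ω => X ω = x ∧ Z ω = z) * condDist p Y (fun ω => X ω = x ∧ Z ω = z) y
        = pr p (fun ω => Z ω = z) * condDist p Y (fun ω => Z ω = z) y := by
    intro z y
    rw [my_pr_mul_condDist hp]
    calc ∑ x, pr p (fun ω => X ω = x ∧ Z ω = z) * condDist p Y (fun ω => X ω = x ∧ Z ω = z) y
        = ∑ x, pr p (fun ω => X ω = x ∧ (Y ω = y ∧ Z ω = z)) := by
          refine Finset.sum_congr rfl fun x _ => ?_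
          rw [my_pr_mul_condDist hp]
          exact my_pr_congr fun ω => by tauto
      _ = pr p (fun ω => Y ω = y ∧ Z ω = z) := my_sum_pr_fiber X _
  have hac : ∀ (x : 𝒳) (z : 𝒵) (y : 𝒴), condDist p Y (fun ω => X ω = x) y = 0 →
      condDist p Y (fun ω => X ω = x ∧ Z ω = z) y = 0 := by
    intro x z y h
    by_cases hx : pr p (fun ω => X ω = x) = 0
    · have h1 : pr p (fun ω => X ω = x ∧ Z ω = z) = 0 :=
        my_pr_zero_of hp (fun ω hω => hω.1) hx
      have h2 : pr p (fun ω => Y ω = y ∧ (X ω = x ∧ Z ω = z)) = 0 :=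
        my_pr_zero_of hp (fun ω hω => hω.2.1) hx
      unfold condDist
      rw [h2, zero_div]
    · have hnum : pr p (fun ω => Y ω = y ∧ X ω = x) = 0 := by
        unfold condDist at h
        rcases div_eq_zero_iff.1 h with h' | h'
        · exact h'
        · exact absurd h' hx
      have h2 : pr p (fun ω => Y ω = y ∧ (X ω = x ∧ Z ω = z)) = 0 :=
        my_pr_zero_of hp (fun ω hω => ⟨hω.1, hω.2.1⟩) hnum
      unfold condDist
      rw [h2, zero_div]
  have herr : ∀ (x : 𝒳) (z : 𝒵),
      ∑ y, (condDist p Y (fun ω => X ω = x) y - condDist p Y (fun ω => X ω = x ∧ Z ω = z) y)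
          * L y (A z)
        ≤ M * Real.sqrt (chiSqDiv (condDist p Y (fun ω => X ω = x ∧ Z ω = z))
            (condDist p Y (fun ω => X ω = x))) := by
    intro x z
    have hl1 : ∑ y, |condDist p Y (fun ω => X ω = x ∧ Z ω = z) y
          - condDist p Y (fun ω => X ω = x) y|
        ≤ Real.sqrt (chiSqDiv (condDist p Y (fun ω => X ω = x ∧ Z ω = z))
            (condDist p Y (fun ω => X ω = x))) :=
      my_l1_le_sqrt_chiSq _ _ (fun y => my_condDist_nonneg hp _ _ y)
        (my_sum_condDist_le_one hp Y _) (hac x z)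
    calc ∑ y, (condDist p Y (fun ω => X ω = x) y
            - condDist p Y (fun ω => X ω = x ∧ Z ω = z) y) * L y (A z)
        ≤ ∑ y, |condDist p Y (fun ω => X ω = x) y
            - condDist p Y (fun ω => X ω = x ∧ Z ω = z) y| * M := by
          refine Finset.sum_le_sum fun y _ => ?_
          calc (condDist p Y (fun ω => X ω = x) y
                - condDist p Y (fun ω => X ω = x ∧ Z ω = z) y) * L y (A z)
              ≤ |(condDist p Y (fun ω => X ω = x) y
                - condDist p Y (fun ω => X ω = x ∧ Z ω = z) y) * L y (A z)| := le_abs_self _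
            _ = |condDist p Y (fun ω => X ω = x) y
                - condDist p Y (fun ω => X ω = x ∧ Z ω = z) y| * |L y (A z)| := abs_mul _ _
            _ ≤ |condDist p Y (fun ω => X ω = x) y
                - condDist p Y (fun ω => X ω = x ∧ Z ω = z) y| * M :=
                mul_le_mul_of_nonneg_left (hL _ _) (abs_nonneg _)
      _ = (∑ y, |condDist p Y (fun ω => X ω = x ∧ Z ω = z) y
            - condDist p Y (fun ω => X ω = x) y|) * M := by
          rw [← Finset.sum_mul]
          congr 1
          exact Finset.sum_congr rfl fun y _ => by rw [abs_sub_comm]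
      _ ≤ Real.sqrt (chiSqDiv (condDist p Y (fun ω => X ω = x ∧ Z ω = z))
            (condDist p Y (fun ω => X ω = x))) * M := mul_le_mul_of_nonneg_right hl1 hM
      _ = M * Real.sqrt (chiSqDiv (condDist p Y (fun ω => X ω = x ∧ Z ω = z))
            (condDist p Y (fun ω => X ω = x))) := mul_comm _ _
  have hCS : ∑ x, ∑ z, pr p (fun ω => X ω = x ∧ Z ω = z)
      * Real.sqrt (chiSqDiv (condDist p Y (fun ω => X ω = x ∧ Z ω = z))
          (condDist p Y (fun ω => X ω = x))) ≤ ε := by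
    have cs := Finset.sum_mul_sq_le_sq_mul_sq (Finset.univ : Finset (𝒳 × 𝒵))
      (fun q => Real.sqrt (pr p (fun ω => X ω = q.1 ∧ Z ω = q.2)))
      (fun q => Real.sqrt (pr p (fun ω => X ω = q.1 ∧ Z ω = q.2)
        * chiSqDiv (condDist p Y (fun ω => X ω = q.1 ∧ Z ω = q.2))
          (condDist p Y (fun ω => X ω = q.1))))
    have e1 : ∀ q : 𝒳 × 𝒵, Real.sqrt (pr p (fun ω => X ω = q.1 ∧ Z ω = q.2))
        * Real.sqrt (pr p (fun ω => X ω = q.1 ∧ Z ω = q.2)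
          * chiSqDiv (condDist p Y (fun ω => X ω = q.1 ∧ Z ω = q.2))
            (condDist p Y (fun ω => X ω = q.1)))
        = pr p (fun ω => X ω = q.1 ∧ Z ω = q.2)
          * Real.sqrt (chiSqDiv (condDist p Y (fun ω => X ω = q.1 ∧ Z ω = q.2))
            (condDist p Y (fun ω => X ω = q.1))) := by
      intro q
      rw [← Real.sqrt_mul (hFnn _ _),
        show pr p (fun ω => X ω = q.1 ∧ Z ω = q.2)
            * (pr p (fun ω => X ω = q.1 ∧ Z ω = q.2)
              * chiSqDiv (condDist p Y (fun ω => X ω = q.1 ∧ Z ω = q.2))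
                (condDist p Y (fun ω => X ω = q.1)))
          = pr p (fun ω => X ω = q.1 ∧ Z ω = q.2) ^ 2
            * chiSqDiv (condDist p Y (fun ω => X ω = q.1 ∧ Z ω = q.2))
              (condDist p Y (fun ω => X ω = q.1)) by ring,
        Real.sqrt_mul (sq_nonneg _), Real.sqrt_sq (hFnn _ _)]
    have eq1 : ∑ q : 𝒳 × 𝒵, Real.sqrt (pr p (fun ω => X ω = q.1 ∧ Z ω = q.2))
        * Real.sqrt (pr p (fun ω => X ω = q.1 ∧ Z ω = q.2)
          * chiSqDiv (condDist p Y (fun ω => X ω = q.1 ∧ Z ω = q.2))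
            (condDist p Y (fun ω => X ω = q.1)))
        = ∑ x, ∑ z, pr p (fun ω => X ω = x ∧ Z ω = z)
          * Real.sqrt (chiSqDiv (condDist p Y (fun ω => X ω = x ∧ Z ω = z))
            (condDist p Y (fun ω => X ω = x))) := by
      rw [Fintype.sum_prod_type]
      exact Finset.sum_congr rfl fun x _ => Finset.sum_congr rfl fun z _ => e1 (x, z)
    have eq2 : ∑ q : 𝒳 × 𝒵, Real.sqrt (pr p (fun ω => X ω = q.1 ∧ Z ω = q.2)) ^ 2 = 1 := by
      rw [Fintype.sum_prod_type, ← hFsum]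
      exact Finset.sum_congr rfl fun x _ => Finset.sum_congr rfl fun z _ =>
        Real.sq_sqrt (hFnn x z)
    have eq3 : ∑ q : 𝒳 × 𝒵, Real.sqrt (pr p (fun ω => X ω = q.1 ∧ Z ω = q.2)
        * chiSqDiv (condDist p Y (fun ω => X ω = q.1 ∧ Z ω = q.2))
          (condDist p Y (fun ω => X ω = q.1))) ^ 2 = chiSqCMI p Y Z X := by
      rw [Fintype.sum_prod_type]
      unfold chiSqCMI
      exact Finset.sum_congr rfl fun x _ => Finset.sum_congr rfl fun z _ =>
        Real.sq_sqrt (mul_nonneg (hFnn x z) (hDnn x z))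
    rw [eq1, eq2, eq3, one_mul] at cs
    have hnn : 0 ≤ ∑ x, ∑ z, pr p (fun ω => X ω = x ∧ Z ω = z)
        * Real.sqrt (chiSqDiv (condDist p Y (fun ω => X ω = x ∧ Z ω = z))
          (condDist p Y (fun ω => X ω = x))) :=
      Finset.sum_nonneg fun x _ => Finset.sum_nonneg fun z _ =>
        mul_nonneg (hFnn x z) (Real.sqrt_nonneg _)
    nlinarith
  have hA' : ∑ z, ∑ x, pr p (fun ω => X ω = x ∧ Z ω = z)
      * expLoss L (condDist p Y (fun ω => X ω = x ∧ Z ω = z)) (A z)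
      = LcondEntropy L p Y Z := by
    unfold LcondEntropy
    refine Finset.sum_congr rfl fun z _ => ?_
    rw [hA z]
    unfold expLoss
    calc ∑ x, pr p (fun ω => X ω = x ∧ Z ω = z)
          * ∑ y, condDist p Y (fun ω => X ω = x ∧ Z ω = z) y * L y (A z)
        = ∑ x, ∑ y, pr p (fun ω => X ω = x ∧ Z ω = z)
            * condDist p Y (fun ω => X ω = x ∧ Z ω = z) y * L y (A z) := by
          refine Finset.sum_congr rfl fun x _ => ?_
          rw [Finset.mul_sum]
          exact Finset.sum_congr rfl fun y _ => (mul_assoc _ _ _).symm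
      _ = ∑ y, ∑ x, pr p (fun ω => X ω = x ∧ Z ω = z)
            * condDist p Y (fun ω => X ω = x ∧ Z ω = z) y * L y (A z) := Finset.sum_comm
      _ = ∑ y, pr p (fun ω => Z ω = z) * condDist p Y (fun ω => Z ω = z) y * L y (A z) := by
          refine Finset.sum_congr rfl fun y _ => ?_
          rw [← Finset.sum_mul, hkey z y]
      _ = pr p (fun ω => Z ω = z) * ∑ y, condDist p Y (fun ω => Z ω = z) y * L y (A z) := by
          rw [Finset.mul_sum]
          exact Finset.sum_congr rfl fun y _ => mul_assoc _ _ _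
  have hB : ∑ x, ∑ z, pr p (fun ω => X ω = x ∧ Z ω = z)
      * (∑ y, (condDist p Y (fun ω => X ω = x) y
          - condDist p Y (fun ω => X ω = x ∧ Z ω = z) y) * L y (A z)) ≤ M * ε := by
    calc ∑ x, ∑ z, pr p (fun ω => X ω = x ∧ Z ω = z)
          * (∑ y, (condDist p Y (fun ω => X ω = x) y
            - condDist p Y (fun ω => X ω = x ∧ Z ω = z) y) * L y (A z))
        ≤ ∑ x, ∑ z, pr p (fun ω => X ω = x ∧ Z ω = z)
          * (M * Real.sqrt (chiSqDiv (condDist p Y (fun ω => X ω = x ∧ Z ω = z))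
            (condDist p Y (fun ω => X ω = x)))) :=
          Finset.sum_le_sum fun x _ => Finset.sum_le_sum fun z _ =>
            mul_le_mul_of_nonneg_left (herr x z) (hFnn x z)
      _ = M * ∑ x, ∑ z, pr p (fun ω => X ω = x ∧ Z ω = z)
          * Real.sqrt (chiSqDiv (condDist p Y (fun ω => X ω = x ∧ Z ω = z))
            (condDist p Y (fun ω => X ω = x))) := by
          rw [Finset.mul_sum]
          refine Finset.sum_congr rfl fun x _ => ?_
          rw [Finset.mul_sum]
          exact Finset.sum_congr rfl fun z _ => by ring
      _ ≤ M * ε := mul_le_mul_of_nonneg_left hCS hM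
  have key : LcondEntropy L p Y X ≤ LcondEntropy L p Y Z + M * ε := by
    calc LcondEntropy L p Y X
        = ∑ x, ∑ z, pr p (fun ω => X ω = x ∧ Z ω = z)
            * Lentropy L (condDist p Y (fun ω => X ω = x)) := by
          unfold LcondEntropy
          exact Finset.sum_congr rfl fun x _ => by rw [hgx x, Finset.sum_mul]
      _ ≤ ∑ x, ∑ z, pr p (fun ω => X ω = x ∧ Z ω = z)
            * expLoss L (condDist p Y (fun ω => X ω = x)) (A z) :=
          Finset.sum_le_sum fun x _ => Finset.sum_le_sum fun z _ =>
            mul_le_mul_of_nonneg_left (my_Lentropy_le_expLoss _ _ _) (hFnn x z)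
      _ = ∑ x, ∑ z, (pr p (fun ω => X ω = x ∧ Z ω = z)
            * expLoss L (condDist p Y (fun ω => X ω = x ∧ Z ω = z)) (A z)
          + pr p (fun ω => X ω = x ∧ Z ω = z)
            * (∑ y, (condDist p Y (fun ω => X ω = x) y
              - condDist p Y (fun ω => X ω = x ∧ Z ω = z) y) * L y (A z))) := by
          refine Finset.sum_congr rfl fun x _ => Finset.sum_congr rfl fun z _ => ?_
          rw [← mul_add]
          congr 1
          unfold expLoss
          rw [← Finset.sum_add_distrib]
          exact Finset.sum_congr rfl fun y _ => by ring
      _ = (∑ x, ∑ z, pr p (fun ω => X ω = x ∧ Z ω = z)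
            * expLoss L (condDist p Y (fun ω => X ω = x ∧ Z ω = z)) (A z))
          + ∑ x, ∑ z, pr p (fun ω => X ω = x ∧ Z ω = z)
            * (∑ y, (condDist p Y (fun ω => X ω = x) y
              - condDist p Y (fun ω => X ω = x ∧ Z ω = z) y) * L y (A z)) := by
          rw [← Finset.sum_add_distrib]
          exact Finset.sum_congr rfl fun x _ => Finset.sum_add_distrib
      _ ≤ LcondEntropy L p Y Z + M * ε := by
          have := hA'
          rw [← Finset.sum_comm] at this
          linarith [hB]
  have hs1 : 1 ≤ Real.sqrt ((Fintype.card 𝒳 : ℝ) * (Fintype.card 𝒵 : ℝ)) := by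
    have h1 : (1 : ℝ) ≤ (Fintype.card 𝒳 : ℝ) := by
      have : 0 < Fintype.card 𝒳 := @Fintype.card_pos 𝒳 _ ⟨X ω0⟩
      exact_mod_cast this
    have h2 : (1 : ℝ) ≤ (Fintype.card 𝒵 : ℝ) := by
      have : 0 < Fintype.card 𝒵 := @Fintype.card_pos 𝒵 _ ⟨Z ω0⟩
      exact_mod_cast this
    calc (1 : ℝ) = Real.sqrt 1 := Real.sqrt_one.symm
      _ ≤ _ := Real.sqrt_le_sqrt (by nlinarith)
  have hfin : M * ε ≤ 2 * M * ε * Real.sqrt ((Fintype.card 𝒳 : ℝ) * (Fintype.card 𝒵 : ℝ)) := by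
    nlinarith [mul_nonneg hM hε]
  linarith
end
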